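/- arXiv:1603.06853 — 3 statements merged into one kernel-verified Lean document; each statement's English description precedes it below -/
import Mathlib

section
/- Let V be a finite-dimensional real vector space and let M ⊆ V be a convex cone (closed under addition and nonnegative scalar multiplication) that is the union of an increasing sequence of convex subsets M[N] (N ∈ ℕ). If U ⊆ M is compact and every point of U is an interior point of M in V, then there exists N ∈ ℕ with U ⊆ M[N]. -/
open Set

/-- Every interior point of the union of an increasing family of convex sets lies in the
interior of one of them (finite dimensions). -/
lemma aux_mem_interior {V : Type*} [NormedAddCommGroup V] [NormedSpace ℝ V]
    [FiniteDimensional ℝ V] (M : Set V) (C : ℕ → Set V)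
    (hconv : ∀ N, Convex ℝ (C N)) (hmono : Monotone C) (hunion : M = ⋃ N, C N)
    {x : V} (hx : x ∈ interior M) : ∃ N, x ∈ interior (C N) := by
  -- a ball around x inside M
  obtain ⟨ε, hε, hball⟩ := Metric.mem_nhds_iff.mp (mem_interior_iff_mem_nhds.mp hx)
  have hballM : Metric.ball x ε ⊆ M := hball
  -- an affine basis and the centroid interior point
  obtain ⟨b⟩ : Nonempty (AffineBasis (Fin (Module.finrank ℝ V + 1)) ℝ V) :=
    AffineBasis.exists_affineBasis_of_finiteDimensional (by simp)
  set y : V := Finset.univ.centroid ℝ b with hy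
  have hyint : y ∈ interior (convexHull ℝ (range b)) :=
    b.centroid_mem_interior_convexHull
  -- choose a small scaling factor
  obtain ⟨R, hR⟩ : ∃ R : ℝ, ∀ i, ‖b i - y‖ ≤ R := by
    refine ⟨Finset.univ.sup' Finset.univ_nonempty (fun i => ‖b i - y‖), fun i => ?_⟩
    exact Finset.le_sup' (fun i => ‖b i - y‖) (Finset.mem_univ i)
  have hR0 : (0:ℝ) ≤ R := le_trans (norm_nonneg _) (hR (Classical.arbitrary _))
  set r : ℝ := ε / (R + 1) with hr
  have hr0 : 0 < r := div_pos hε (by linarith)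
  -- the affine contraction sending y to x
  set f : V →ᵃ[ℝ] V :=
    ((AffineEquiv.constVAdd ℝ V (x - y)).toAffineMap).comp (AffineMap.homothety y r) with hf
  have hfapp : ∀ v, f v = (x - r • y) + r • v := by
    intro v
    simp [hf, AffineMap.homothety_apply, smul_sub]
    abel
  -- f as a homeomorphism
  set h : V ≃ₜ V :=
    (Homeomorph.smulOfNeZero r (ne_of_gt hr0)).trans
      (Homeomorph.addLeft (x - r • y)) with hh
  have hfh : ∀ v, h v = f v := by
    intro v
    simp [hh, hfapp]
  have hfy : f y = x := by
    rw [hfapp]; abel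
  -- images of the vertices are in the ball
  have hvert : ∀ i, f (b i) ∈ Metric.ball x ε := by
    intro i
    have : f (b i) - x = r • (b i - y) := by rw [hfapp]; rw [smul_sub]; abel
    have hnorm : ‖f (b i) - x‖ = r * ‖b i - y‖ := by
      rw [this, norm_smul, Real.norm_eq_abs, abs_of_pos hr0]
    have : r * ‖b i - y‖ < ε := by
      calc r * ‖b i - y‖ ≤ r * R := by
            exact mul_le_mul_of_nonneg_left (hR i) (le_of_lt hr0)
        _ < ε := by
            rw [hr, div_mul_eq_mul_div, div_lt_iff₀ (by linarith)]
            nlinarith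
    simp [Metric.mem_ball, dist_eq_norm, hnorm, this]
  -- each vertex lies in some C N; take the max
  have hex : ∀ i, ∃ N, f (b i) ∈ C N := by
    intro i
    have := hballM (hvert i)
    rw [hunion] at this
    simpa using this
  choose Ns hNs using hex
  refine ⟨Finset.univ.sup Ns, ?_⟩
  have hsub : f '' (range b) ⊆ C (Finset.univ.sup Ns) := by
    rintro _ ⟨_, ⟨i, rfl⟩, rfl⟩
    exact hmono (Finset.le_sup (Finset.mem_univ i)) (hNs i)
  have hhull : f '' (convexHull ℝ (range b)) ⊆ C (Finset.univ.sup Ns) := by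
    rw [AffineMap.image_convexHull]
    exact convexHull_min hsub (hconv _)
  -- transport the interior point
  have himg : f '' (interior (convexHull ℝ (range b)))
      ⊆ interior (C (Finset.univ.sup Ns)) := by
    have heq : f '' (interior (convexHull ℝ (range b)))
        = h '' (interior (convexHull ℝ (range b))) := by
      apply image_congr; intro v _; exact (hfh v).symm
    rw [heq, Homeomorph.image_interior]
    apply interior_mono
    rw [← heq] at *
    calc h '' (convexHull ℝ (range b)) = f '' (convexHull ℝ (range b)) :=
          image_congr fun v _ => hfh v
      _ ⊆ C (Finset.univ.sup Ns) := hhull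
  have : f y ∈ interior (C (Finset.univ.sup Ns)) := himg ⟨y, hyint, rfl⟩
  rwa [hfy] at this

theorem stmt0 {V : Type*} [NormedAddCommGroup V] [NormedSpace ℝ V]
    [FiniteDimensional ℝ V]
    (M : Set V) (C : ℕ → Set V) (U : Set V)
    (hadd : ∀ x ∈ M, ∀ y ∈ M, x + y ∈ M)
    (hsmul : ∀ (c : ℝ), 0 ≤ c → ∀ x ∈ M, c • x ∈ M)
    (hconv : ∀ N, Convex ℝ (C N))
    (hmono : Monotone C)
    (hunion : M = ⋃ N, C N)
    (hUM : U ⊆ M) (hUcomp : IsCompact U) (hUint : U ⊆ interior M) :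
    ∃ N, U ⊆ C N := by
  have hcover : U ⊆ ⋃ N, interior (C N) := by
    intro x hx
    obtain ⟨N, hN⟩ := aux_mem_interior M C hconv hmono hunion (hUint hx)
    exact mem_iUnion.mpr ⟨N, hN⟩
  obtain ⟨t, ht⟩ := hUcomp.elim_finite_subcover (fun N => interior (C N))
    (fun N => isOpen_interior) hcover
  refine ⟨t.sup id, fun x hx => ?_⟩
  obtain ⟨N, hNt, hN⟩ := by simpa using ht hx
  exact hmono (Finset.le_sup (f := id) hNt) (interior_subset hN)
end

section
/- Assuming Putinar's Positivstellensatz for matrix polynomials (if M_{g,ℝ[X]} is Archimedean and A ≻ 0 on S_g then A ∈ M_{g,ℝ[X]^{k×k}}), the following degree-bounded version holds: for all L ∈ ℕ there exists N ∈ ℕ such that every symmetric matrix polynomial A ∈ ℝ[X]^{k×k} with all entries of degree at most L, ‖A‖ ≤ L, and A(x) ⪰ (1/L)·Id for all x ∈ S_g, satisfies A ∈ M_{g,ℝ[X]^{k×k}}[N]. -/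
def IsSOS {n : ℕ} (p : MvPolynomial (Fin n) ℝ) : Prop :=
  ∃ (k : ℕ) (q : Fin k → MvPolynomial (Fin n) ℝ), p = ∑ i, q i ^ 2

def QM {n m : ℕ} (g : Fin m → MvPolynomial (Fin n) ℝ) :
    Set (MvPolynomial (Fin n) ℝ) :=
  {f | ∃ (s₀ : MvPolynomial (Fin n) ℝ) (s : Fin m → MvPolynomial (Fin n) ℝ),
    IsSOS s₀ ∧ (∀ i, IsSOS (s i)) ∧ f = s₀ + ∑ i, g i * s i}

def MatIsSOS {n k : ℕ} (S : Matrix (Fin k) (Fin k) (MvPolynomial (Fin n) ℝ)) : Prop :=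
  ∃ (h : ℕ) (C : Matrix (Fin h) (Fin k) (MvPolynomial (Fin n) ℝ)), S = C.transpose * C

def MatQM {n m k : ℕ} (g : Fin m → MvPolynomial (Fin n) ℝ) :
    Set (Matrix (Fin k) (Fin k) (MvPolynomial (Fin n) ℝ)) :=
  {A | ∃ (S₀ : Matrix (Fin k) (Fin k) (MvPolynomial (Fin n) ℝ))
        (S : Fin m → Matrix (Fin k) (Fin k) (MvPolynomial (Fin n) ℝ)),
    MatIsSOS S₀ ∧ (∀ i, MatIsSOS (S i)) ∧ A = S₀ + ∑ i, g i • S i}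

/-- Truncated matrix quadratic module: `deg S₀ ≤ N` and `deg (gᵢ • Sᵢ) ≤ N` entrywise. -/
def MatQMtrunc {n m k : ℕ} (g : Fin m → MvPolynomial (Fin n) ℝ) (N : ℕ) :
    Set (Matrix (Fin k) (Fin k) (MvPolynomial (Fin n) ℝ)) :=
  {A | ∃ (S₀ : Matrix (Fin k) (Fin k) (MvPolynomial (Fin n) ℝ))
        (S : Fin m → Matrix (Fin k) (Fin k) (MvPolynomial (Fin n) ℝ)),
    MatIsSOS S₀ ∧ (∀ i, MatIsSOS (S i)) ∧
    (∀ a b, (S₀ a b).totalDegree ≤ N) ∧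
    (∀ i a b, ((g i • S i) a b).totalDegree ≤ N) ∧
    A = S₀ + ∑ i, g i • S i}

/-- A fixed norm on polynomials: the sum of absolute values of the coefficients. -/
def polyNorm {n : ℕ} (f : MvPolynomial (Fin n) ℝ) : ℝ :=
  ∑ d ∈ f.support, |f.coeff d|

/-- A fixed norm on matrix polynomials. -/
def matNorm {n k : ℕ} (A : Matrix (Fin k) (Fin k) (MvPolynomial (Fin n) ℝ)) : ℝ :=
  ∑ a, ∑ b, polyNorm (A a b)


open MvPolynomial in
theorem isSOS_zero {n : ℕ} : IsSOS (0 : MvPolynomial (Fin n) ℝ) :=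
  ⟨0, fun i => 0, by simp⟩

open MvPolynomial in
theorem isSOS_const {n : ℕ} {t : ℝ} (ht : 0 ≤ t) : IsSOS (C t : MvPolynomial (Fin n) ℝ) :=
  ⟨1, fun _ => C (Real.sqrt t), by
    simp [← map_pow, Real.sq_sqrt ht]⟩

open MvPolynomial in
theorem IsSOS.add {n : ℕ} {p q : MvPolynomial (Fin n) ℝ} (hp : IsSOS p) (hq : IsSOS q) :
    IsSOS (p + q) := by
  obtain ⟨k₁, u, hu⟩ := hp
  obtain ⟨k₂, v, hv⟩ := hq
  refine ⟨k₁ + k₂, Fin.append u v, ?_⟩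
  rw [Fin.sum_univ_add]
  simp [Fin.append_left, Fin.append_right, hu, hv]

open MvPolynomial in
theorem IsSOS.const_mul {n : ℕ} {p : MvPolynomial (Fin n) ℝ} {t : ℝ} (ht : 0 ≤ t)
    (hp : IsSOS p) : IsSOS (C t * p) := by
  obtain ⟨k₁, u, hu⟩ := hp
  refine ⟨k₁, fun i => C (Real.sqrt t) * u i, ?_⟩
  rw [hu, Finset.mul_sum]
  congr 1; ext i
  rw [mul_pow, ← map_pow, Real.sq_sqrt ht]

/-- scalar truncated quadratic module -/
def QMt {n m : ℕ} (g : Fin m → MvPolynomial (Fin n) ℝ) (N : ℕ) :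
    Set (MvPolynomial (Fin n) ℝ) :=
  {f | ∃ (s₀ : MvPolynomial (Fin n) ℝ) (s : Fin m → MvPolynomial (Fin n) ℝ),
    IsSOS s₀ ∧ (∀ i, IsSOS (s i)) ∧ s₀.totalDegree ≤ N ∧
    (∀ i, (g i * s i).totalDegree ≤ N) ∧ f = s₀ + ∑ i, g i * s i}

open MvPolynomial

theorem qmt_mono {n m : ℕ} {g : Fin m → MvPolynomial (Fin n) ℝ} {N N' : ℕ} (h : N ≤ N')
    {f : MvPolynomial (Fin n) ℝ} (hf : f ∈ QMt g N) : f ∈ QMt g N' := by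
  obtain ⟨s₀, s, h1, h2, h3, h4, h5⟩ := hf
  exact ⟨s₀, s, h1, h2, h3.trans h, fun i => (h4 i).trans h, h5⟩

theorem qmt_zero {n m : ℕ} {g : Fin m → MvPolynomial (Fin n) ℝ} {N : ℕ} :
    (0 : MvPolynomial (Fin n) ℝ) ∈ QMt g N :=
  ⟨0, fun _ => 0, isSOS_zero, fun _ => isSOS_zero, by simp, by simp, by simp⟩

theorem qmt_const {n m : ℕ} {g : Fin m → MvPolynomial (Fin n) ℝ} {N : ℕ} {t : ℝ} (ht : 0 ≤ t) :
    (C t : MvPolynomial (Fin n) ℝ) ∈ QMt g N :=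
  ⟨C t, fun _ => 0, isSOS_const ht, fun _ => isSOS_zero, by simp, by simp, by simp⟩

theorem qmt_add {n m : ℕ} {g : Fin m → MvPolynomial (Fin n) ℝ} {N : ℕ}
    {f₁ f₂ : MvPolynomial (Fin n) ℝ} (h₁ : f₁ ∈ QMt g N) (h₂ : f₂ ∈ QMt g N) :
    f₁ + f₂ ∈ QMt g N := by
  obtain ⟨s₀, s, a1, a2, a3, a4, a5⟩ := h₁
  obtain ⟨t₀, t, b1, b2, b3, b4, b5⟩ := h₂
  refine ⟨s₀ + t₀, fun i => s i + t i, a1.add b1, fun i => (a2 i).add (b2 i),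
    (totalDegree_add _ _).trans (by simp [a3, b3]), fun i => ?_, ?_⟩
  · rw [mul_add]
    exact (totalDegree_add _ _).trans (by simp [a4 i, b4 i])
  · rw [a5, b5]
    simp only [mul_add, Finset.sum_add_distrib]
    ring
theorem qmt_const_mul {n m : ℕ} {g : Fin m → MvPolynomial (Fin n) ℝ} {N : ℕ} {t : ℝ} (ht : 0 ≤ t)
    {f : MvPolynomial (Fin n) ℝ} (h : f ∈ QMt g N) : C t * f ∈ QMt g N := by
  obtain ⟨s₀, s, a1, a2, a3, a4, a5⟩ := h
  refine ⟨C t * s₀, fun i => C t * s i, a1.const_mul ht, fun i => (a2 i).const_mul ht,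
    (totalDegree_mul _ _).trans (by simp [a3]), fun i => ?_, ?_⟩
  · calc (g i * (C t * s i)).totalDegree = (C t * (g i * s i)).totalDegree := by ring_nf
    _ ≤ (C t).totalDegree + (g i * s i).totalDegree := totalDegree_mul _ _
    _ ≤ N := by simp [a4 i]
  · rw [a5, mul_add, Finset.mul_sum]
    congr 1
    exact Finset.sum_congr rfl fun i _ => by ring

theorem qmt_sum {n m : ℕ} {g : Fin m → MvPolynomial (Fin n) ℝ} {N : ℕ} {ι : Type*}
    (s : Finset ι) (f : ι → MvPolynomial (Fin n) ℝ) (h : ∀ i ∈ s, f i ∈ QMt g N) :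
    (∑ i ∈ s, f i) ∈ QMt g N := by
  induction s using Finset.cons_induction with
  | empty => simpa using qmt_zero
  | cons x s hx ih =>
    rw [Finset.sum_cons]
    exact qmt_add (h _ (Finset.mem_cons_self _ _))
      (ih fun i hi => h i (Finset.mem_cons_of_mem hi))

theorem qm_qmt {n m : ℕ} {g : Fin m → MvPolynomial (Fin n) ℝ} {f : MvPolynomial (Fin n) ℝ}
    (h : f ∈ QM g) : ∃ N, f ∈ QMt g N := by
  obtain ⟨s₀, s, a1, a2, a5⟩ := h
  refine ⟨max s₀.totalDegree (Finset.univ.sup fun i => (g i * s i).totalDegree),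
    s₀, s, a1, a2, le_max_left _ _, fun i => le_max_of_le_right ?_, a5⟩
  exact Finset.le_sup (f := fun i => (g i * s i).totalDegree) (Finset.mem_univ i)

open MvPolynomial

theorem polyNorm_nonneg {n : ℕ} (f : MvPolynomial (Fin n) ℝ) : 0 ≤ polyNorm f :=
  Finset.sum_nonneg fun _ _ => abs_nonneg _

theorem polyNorm_eq_sum {n : ℕ} {f : MvPolynomial (Fin n) ℝ} {s : Finset ((Fin n) →₀ ℕ)}
    (h : f.support ⊆ s) : polyNorm f = ∑ d ∈ s, |f.coeff d| := by
  refine Finset.sum_subset h fun d _ hd => ?_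
  simp [MvPolynomial.notMem_support_iff.mp hd]

theorem abs_coeff_le_polyNorm {n : ℕ} (f : MvPolynomial (Fin n) ℝ) (d : (Fin n) →₀ ℕ) :
    |f.coeff d| ≤ polyNorm f := by
  by_cases hd : d ∈ f.support
  · exact Finset.single_le_sum (f := fun e => |f.coeff e|) (fun _ _ => abs_nonneg _) hd
  · simp [MvPolynomial.notMem_support_iff.mp hd, polyNorm_nonneg]

theorem eq_zero_of_polyNorm {n : ℕ} {f : MvPolynomial (Fin n) ℝ} (h : polyNorm f ≤ 0) :
    f = 0 := by
  ext d
  have := (abs_coeff_le_polyNorm f d).trans h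
  have : |f.coeff d| = 0 := le_antisymm this (abs_nonneg _)
  simpa using abs_eq_zero.mp this

/-- the set of monomials (exponent vectors) of degree at most `L` -/
noncomputable def monSet (n L : ℕ) : Finset ((Fin n) →₀ ℕ) :=
  (Finset.Iic (Finsupp.equivFunOnFinite.symm fun _ => L)).filter
    (fun d => (d.sum fun _ e => e) ≤ L)

theorem mem_monSet {n L : ℕ} {d : (Fin n) →₀ ℕ} :
    d ∈ monSet n L ↔ (d.sum fun _ e => e) ≤ L := by
  simp only [monSet, Finset.mem_filter, Finset.mem_Iic, and_iff_right_iff_imp]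
  intro hd
  intro i
  simp only [Finsupp.coe_equivFunOnFinite_symm]
  calc d i ≤ ∑ j ∈ d.support, d j := by
        by_cases hi : i ∈ d.support
        · exact Finset.single_le_sum (fun _ _ => Nat.zero_le _) hi
        · simp [Finsupp.notMem_support_iff.mp hi]
  _ = d.sum fun _ e => e := rfl
  _ ≤ L := hd

theorem support_subset_monSet {n L : ℕ} {f : MvPolynomial (Fin n) ℝ}
    (h : f.totalDegree ≤ L) : f.support ⊆ monSet n L := fun d hd =>
  mem_monSet.mpr ((MvPolynomial.le_totalDegree hd).trans h)

theorem eq_sum_monSet {n L : ℕ} {f : MvPolynomial (Fin n) ℝ} (h : f.totalDegree ≤ L) :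
    f = ∑ d ∈ monSet n L, monomial d (f.coeff d) := by
  classical
  have h2 := Finset.sum_subset (f := fun d => (monomial d (f.coeff d) : MvPolynomial (Fin n) ℝ))
    (support_subset_monSet h)
    (fun d _ hd => by show monomial d (f.coeff d) = 0; rw [MvPolynomial.notMem_support_iff.mp hd, map_zero])
  rw [← h2, ← f.as_sum]

theorem polyNorm_sum_monomial_le {n : ℕ} (s : Finset ((Fin n) →₀ ℕ)) (c : ((Fin n) →₀ ℕ) → ℝ) :
    polyNorm (∑ d ∈ s, monomial d (c d)) ≤ ∑ d ∈ s, |c d| := by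
  classical
  have hsupp : (∑ d ∈ s, (monomial d (c d) : MvPolynomial (Fin n) ℝ)).support ⊆ s := by
    refine (MvPolynomial.support_sum).trans ?_
    intro d hd
    simp only [Finset.mem_biUnion] at hd
    obtain ⟨e, he, hd⟩ := hd
    have := MvPolynomial.support_monomial_subset hd
    simp only [Finset.mem_singleton] at this
    rwa [this]
  rw [polyNorm_eq_sum hsupp]
  refine Finset.sum_le_sum fun d hd => ?_
  have : (∑ e ∈ s, (monomial e (c e) : MvPolynomial (Fin n) ℝ)).coeff d
      = ∑ e ∈ s, if e = d then c e else 0 := by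
    rw [MvPolynomial.coeff_sum]
    exact Finset.sum_congr rfl fun e _ => MvPolynomial.coeff_monomial _ _ _
  rw [this, Finset.sum_ite_eq' s d c, if_pos hd]

theorem totalDegree_sum_monSet_le {n L : ℕ} (c : ((Fin n) →₀ ℕ) → ℝ) :
    (∑ d ∈ monSet n L, (monomial d (c d) : MvPolynomial (Fin n) ℝ)).totalDegree ≤ L := by
  refine (MvPolynomial.totalDegree_finset_sum _ _).trans (Finset.sup_le fun d hd => ?_)
  exact (MvPolynomial.totalDegree_monomial_le _ _).trans (mem_monSet.mp hd)

open MvPolynomial in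
theorem S1 {n m : ℕ} (g : Fin m → MvPolynomial (Fin n) ℝ)
    (harch : ∀ f : MvPolynomial (Fin n) ℝ, ∃ N : ℕ, (N : MvPolynomial (Fin n) ℝ) + f ∈ QM g)
    (L : ℕ) :
    ∃ c : ℝ, 0 ≤ c ∧ ∃ N₀ : ℕ, ∀ f : MvPolynomial (Fin n) ℝ, f.totalDegree ≤ L →
      polyNorm f ≤ 1 → C c + f ∈ QMt g N₀ := by
  classical
  have hp : ∀ d : (Fin n) →₀ ℕ, ∃ (Np Kp : ℕ),
      (C (Np : ℝ) + monomial d 1) ∈ QMt g Kp := by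
    intro d
    obtain ⟨Np, hNp⟩ := harch (monomial d 1)
    obtain ⟨Kp, hKp⟩ := qm_qmt hNp
    refine ⟨Np, Kp, ?_⟩
    rwa [show (C (Np:ℝ) : MvPolynomial (Fin n) ℝ) = (Np : MvPolynomial (Fin n) ℝ) by
      simp [map_natCast]]
  have hm : ∀ d : (Fin n) →₀ ℕ, ∃ (Nm Km : ℕ),
      (C (Nm : ℝ) - monomial d 1) ∈ QMt g Km := by
    intro d
    obtain ⟨Nm, hNm⟩ := harch (-monomial d 1)
    obtain ⟨Km, hKm⟩ := qm_qmt hNm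
    refine ⟨Nm, Km, ?_⟩
    rw [sub_eq_add_neg]
    rwa [show (C (Nm:ℝ) : MvPolynomial (Fin n) ℝ) = (Nm : MvPolynomial (Fin n) ℝ) by
      simp [map_natCast]]
  choose Np Kp hKp using hp
  choose Nm Km hKm using hm
  set Mon := monSet n L with hMon
  refine ⟨1 + ∑ d ∈ Mon, ((Np d : ℝ) + (Nm d : ℝ)), by positivity,
    Mon.sup (fun d => max (Kp d) (Km d)), fun f hdeg hnorm => ?_⟩
  set c := 1 + ∑ d ∈ Mon, ((Np d : ℝ) + (Nm d : ℝ)) with hc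
  set N₀ := Mon.sup (fun d => max (Kp d) (Km d)) with hN₀
  set q : ((Fin n) →₀ ℕ) → ℝ := fun d => if 0 ≤ f.coeff d then (Np d : ℝ) else (Nm d : ℝ)
    with hq
  have habs : ∀ d, |f.coeff d| ≤ 1 := fun d => (abs_coeff_le_polyNorm f d).trans hnorm
  have key : C c + f = C (c - ∑ d ∈ Mon, |f.coeff d| * q d)
      + ∑ d ∈ Mon, (C (|f.coeff d| * q d) + monomial d (f.coeff d)) := by
    rw [Finset.sum_add_distrib, map_sub, map_sum]
    have := eq_sum_monSet hdeg
    rw [← hMon] at this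
    rw [← this]
    ring
  rw [key]
  refine qmt_add (qmt_const ?_) (qmt_sum _ _ fun d hd => ?_)
  · rw [sub_nonneg, hc]
    have : ∀ d ∈ Mon, |f.coeff d| * q d ≤ (Np d : ℝ) + (Nm d : ℝ) := by
      intro d _
      calc |f.coeff d| * q d ≤ 1 * q d := by
            refine mul_le_mul_of_nonneg_right (habs d) ?_
            rw [hq]; positivity
      _ = q d := one_mul _
      _ ≤ (Np d : ℝ) + (Nm d : ℝ) := by simp only [hq]; split <;> simp
    calc ∑ d ∈ Mon, |f.coeff d| * q d ≤ ∑ d ∈ Mon, ((Np d : ℝ) + (Nm d : ℝ)) :=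
          Finset.sum_le_sum this
    _ ≤ 1 + ∑ d ∈ Mon, ((Np d : ℝ) + (Nm d : ℝ)) := by linarith
  · by_cases hsgn : 0 ≤ f.coeff d
    · have : C (|f.coeff d| * q d) + monomial d (f.coeff d)
          = C |f.coeff d| * (C (Np d : ℝ) + monomial d 1) := by
        simp only [hq]
        rw [if_pos hsgn, mul_add, ← map_mul, MvPolynomial.C_mul_monomial, mul_one,
          abs_of_nonneg hsgn]
      rw [this]
      exact qmt_const_mul (abs_nonneg _) (qmt_mono
        (le_trans (le_max_left _ _) (Finset.le_sup (f := fun d => max (Kp d) (Km d)) hd))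
        (hKp d))
    · have : C (|f.coeff d| * q d) + monomial d (f.coeff d)
          = C |f.coeff d| * (C (Nm d : ℝ) - monomial d 1) := by
        simp only [hq]
        rw [if_neg hsgn, mul_sub, ← map_mul, MvPolynomial.C_mul_monomial, mul_one,
          abs_of_neg (lt_of_not_ge hsgn), sub_eq_add_neg]
        congr 1
        rw [← map_neg, neg_neg]
      rw [this]
      exact qmt_const_mul (abs_nonneg _) (qmt_mono
        (le_trans (le_max_right _ _) (Finset.le_sup (f := fun d => max (Kp d) (Km d)) hd))
        (hKm d))
open MvPolynomial Matrix

theorem matIsSOS_of_fintype {n k : ℕ} {ι : Type*} [Fintype ι]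
    (B : Matrix ι (Fin k) (MvPolynomial (Fin n) ℝ)) : MatIsSOS (B.transpose * B) := by
  classical
  obtain ⟨e⟩ : Nonempty (ι ≃ Fin (Fintype.card ι)) := ⟨Fintype.equivFin ι⟩
  refine ⟨Fintype.card ι, B.submatrix e.symm id, ?_⟩
  refine Matrix.ext fun a b => ?_
  simp only [Matrix.mul_apply, Matrix.transpose_apply, Matrix.submatrix_apply, id]
  exact (Equiv.sum_comp e.symm fun j => B j a * B j b).symm

theorem matIsSOS_zero {n k : ℕ} : MatIsSOS (0 : Matrix (Fin k) (Fin k) (MvPolynomial (Fin n) ℝ)) :=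
  ⟨0, 0, by ext a b; simp [Matrix.mul_apply]⟩

theorem MatIsSOS.add {n k : ℕ} {A B : Matrix (Fin k) (Fin k) (MvPolynomial (Fin n) ℝ)}
    (hA : MatIsSOS A) (hB : MatIsSOS B) : MatIsSOS (A + B) := by
  obtain ⟨h₁, C₁, rfl⟩ := hA
  obtain ⟨h₂, C₂, rfl⟩ := hB
  have := matIsSOS_of_fintype (n := n) (k := k) (ι := Fin h₁ ⊕ Fin h₂)
    (Matrix.of (Sum.elim (fun j => C₁ j) (fun j => C₂ j)))
  convert this using 1
  refine Matrix.ext fun a b => ?_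
  simp [Matrix.mul_apply, Fintype.sum_sum_type]

theorem MatIsSOS.const_mul {n k : ℕ} {A : Matrix (Fin k) (Fin k) (MvPolynomial (Fin n) ℝ)}
    {t : ℝ} (ht : 0 ≤ t) (hA : MatIsSOS A) :
    MatIsSOS (Matrix.of fun a b => C t * A a b) := by
  obtain ⟨h₁, C₁, rfl⟩ := hA
  refine ⟨h₁, Matrix.of fun j b => C (Real.sqrt t) * C₁ j b, ?_⟩
  refine Matrix.ext fun a b => ?_
  simp only [Matrix.mul_apply, Matrix.transpose_apply, Matrix.of_apply, Finset.mul_sum]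
  refine Finset.sum_congr rfl fun j _ => ?_
  rw [show C (Real.sqrt t) * C₁ j a * (C (Real.sqrt t) * C₁ j b)
    = (C (Real.sqrt t) * C (Real.sqrt t)) * (C₁ j a * C₁ j b) by ring, ← MvPolynomial.C_mul,
    Real.mul_self_sqrt ht]

theorem matIsSOS_const_psd {n k : ℕ} {P : Matrix (Fin k) (Fin k) ℝ} (hP : P.PosSemidef) :
    MatIsSOS (P.map (C : ℝ →+* MvPolynomial (Fin n) ℝ)) := by
  obtain ⟨B, rfl⟩ : ∃ B : Matrix (Fin k) (Fin k) ℝ, P = B.conjTranspose * B := by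
    open scoped MatrixOrder in
    exact CStarAlgebra.nonneg_iff_eq_star_mul_self.mp hP.nonneg
  refine ⟨k, B.map (C : ℝ →+* MvPolynomial (Fin n) ℝ), ?_⟩
  refine Matrix.ext fun a b => ?_
  simp only [Matrix.map_apply, Matrix.mul_apply, Matrix.conjTranspose_apply,
    Matrix.transpose_apply, map_sum, star_trivial, MvPolynomial.C_mul]
open MvPolynomial Matrix

theorem smul_matrix_apply {n k : ℕ} (p : MvPolynomial (Fin n) ℝ)
    (S : Matrix (Fin k) (Fin k) (MvPolynomial (Fin n) ℝ)) (a b : Fin k) :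
    (p • S) a b = p * S a b := rfl

theorem matqmt_mono {n m k : ℕ} {g : Fin m → MvPolynomial (Fin n) ℝ} {N N' : ℕ} (h : N ≤ N')
    {A : Matrix (Fin k) (Fin k) (MvPolynomial (Fin n) ℝ)} (hA : A ∈ MatQMtrunc g N) :
    A ∈ MatQMtrunc g N' := by
  obtain ⟨S₀, S, h1, h2, h3, h4, h5⟩ := hA
  exact ⟨S₀, S, h1, h2, fun a b => (h3 a b).trans h, fun i a b => (h4 i a b).trans h, h5⟩

theorem matqmt_zero {n m k : ℕ} {g : Fin m → MvPolynomial (Fin n) ℝ} {N : ℕ} :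
    (0 : Matrix (Fin k) (Fin k) (MvPolynomial (Fin n) ℝ)) ∈ MatQMtrunc g N := by
  refine ⟨0, fun _ => 0, matIsSOS_zero, fun _ => matIsSOS_zero, by simp, by simp, by simp⟩

theorem matqmt_add {n m k : ℕ} {g : Fin m → MvPolynomial (Fin n) ℝ} {N : ℕ}
    {A B : Matrix (Fin k) (Fin k) (MvPolynomial (Fin n) ℝ)}
    (hA : A ∈ MatQMtrunc g N) (hB : B ∈ MatQMtrunc g N) : A + B ∈ MatQMtrunc g N := by
  obtain ⟨S₀, S, a1, a2, a3, a4, a5⟩ := hA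
  obtain ⟨T₀, T, b1, b2, b3, b4, b5⟩ := hB
  refine ⟨S₀ + T₀, fun i => S i + T i, a1.add b1, fun i => (a2 i).add (b2 i),
    fun a b => ?_, fun i a b => ?_, ?_⟩
  · exact (MvPolynomial.totalDegree_add _ _).trans (by simp [a3 a b, b3 a b])
  · have : (g i • (S i + T i)) a b = (g i • S i) a b + (g i • T i) a b := by
      simp [smul_matrix_apply, mul_add]
    rw [this]
    have h1 := a4 i a b; have h2 := b4 i a b
    rw [smul_matrix_apply] at h1 h2
    exact (MvPolynomial.totalDegree_add _ _).trans (by simp [h1, h2])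
  · rw [a5, b5]
    have : ∀ i, g i • (S i + T i) = g i • S i + g i • T i := fun i => smul_add _ _ _
    simp only [this, Finset.sum_add_distrib]
    abel

theorem matqmt_sum {n m k : ℕ} {g : Fin m → MvPolynomial (Fin n) ℝ} {N : ℕ} {ι : Type*}
    (s : Finset ι) (F : ι → Matrix (Fin k) (Fin k) (MvPolynomial (Fin n) ℝ))
    (h : ∀ i ∈ s, F i ∈ MatQMtrunc g N) : (∑ i ∈ s, F i) ∈ MatQMtrunc g N := by
  induction s using Finset.cons_induction with
  | empty => simpa using matqmt_zero
  | cons x s hx ih =>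
    rw [Finset.sum_cons]
    exact matqmt_add (h _ (Finset.mem_cons_self _ _))
      (ih fun i hi => h i (Finset.mem_cons_of_mem hi))

theorem matqmt_const_smul {n m k : ℕ} {g : Fin m → MvPolynomial (Fin n) ℝ} {N : ℕ} {t : ℝ}
    (ht : 0 ≤ t) {A : Matrix (Fin k) (Fin k) (MvPolynomial (Fin n) ℝ)}
    (hA : A ∈ MatQMtrunc g N) : (Matrix.of fun a b => C t * A a b) ∈ MatQMtrunc g N := by
  obtain ⟨S₀, S, a1, a2, a3, a4, a5⟩ := hA
  refine ⟨Matrix.of fun a b => C t * S₀ a b, fun i => Matrix.of fun a b => C t * S i a b,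
    a1.const_mul ht, fun i => (a2 i).const_mul ht, fun a b => ?_, fun i a b => ?_, ?_⟩
  · exact (MvPolynomial.totalDegree_mul _ _).trans (by simp [a3 a b])
  · have : (g i • Matrix.of fun a b => C t * S i a b) a b = C t * ((g i • S i) a b) := by
      simp [smul_matrix_apply]; ring
    rw [this]
    have h1 := a4 i a b
    rw [smul_matrix_apply] at h1
    exact (MvPolynomial.totalDegree_mul _ _).trans (by simp [h1])
  · refine Matrix.ext fun a b => ?_
    rw [a5]
    simp only [Matrix.of_apply, Matrix.add_apply, Matrix.sum_apply, smul_matrix_apply,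
      mul_add, Finset.mul_sum]
    congr 1
    exact Finset.sum_congr rfl fun i _ => by ring

theorem matqm_matqmt {n m k : ℕ} {g : Fin m → MvPolynomial (Fin n) ℝ}
    {A : Matrix (Fin k) (Fin k) (MvPolynomial (Fin n) ℝ)} (hA : A ∈ MatQM g) :
    ∃ N, A ∈ MatQMtrunc g N := by
  obtain ⟨S₀, S, a1, a2, a5⟩ := hA
  classical
  refine ⟨max (Finset.univ.sup fun p : Fin k × Fin k => (S₀ p.1 p.2).totalDegree)
    (Finset.univ.sup fun p : Fin m × Fin k × Fin k => ((g p.1 • S p.1) p.2.1 p.2.2).totalDegree),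
    S₀, S, a1, a2, fun a b => le_max_of_le_left ?_, fun i a b => le_max_of_le_right ?_, a5⟩
  · exact Finset.le_sup (f := fun p : Fin k × Fin k => (S₀ p.1 p.2).totalDegree)
      (Finset.mem_univ (a, b))
  · have := Finset.le_sup
      (f := fun p : Fin m × Fin k × Fin k => ((g p.1 • S p.1) p.2.1 p.2.2).totalDegree)
      (Finset.mem_univ (i, a, b))
    exact this

/-- f • vvᵀ is in the truncated module when f is. -/
theorem matqmt_scalar_outer {n m k : ℕ} {g : Fin m → MvPolynomial (Fin n) ℝ} {N : ℕ}
    {f : MvPolynomial (Fin n) ℝ} (hf : f ∈ QMt g N) (v : Fin k → ℝ) :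
    (Matrix.of fun a b => C (v a * v b) * f) ∈ MatQMtrunc g N := by
  obtain ⟨s₀, s, a1, a2, a3, a4, a5⟩ := hf
  obtain ⟨r, u, hu⟩ := a1
  choose rs us hus using a2
  refine ⟨Matrix.of fun a b => C (v a * v b) * s₀,
    fun i => Matrix.of fun a b => C (v a * v b) * s i,
    ⟨r, Matrix.of fun j b => u j * C (v b), ?_⟩,
    fun i => ⟨rs i, Matrix.of fun j b => us i j * C (v b), ?_⟩,
    fun a b => ?_, fun i a b => ?_, ?_⟩
  · refine Matrix.ext fun a b => ?_
    simp only [Matrix.mul_apply, Matrix.transpose_apply, Matrix.of_apply, hu,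
      Finset.sum_mul, Finset.mul_sum]
    refine Finset.sum_congr rfl fun j _ => ?_
    rw [MvPolynomial.C_mul]
    ring
  · refine Matrix.ext fun a b => ?_
    simp only [Matrix.mul_apply, Matrix.transpose_apply, Matrix.of_apply, hus i,
      Finset.sum_mul, Finset.mul_sum]
    refine Finset.sum_congr rfl fun j _ => ?_
    rw [MvPolynomial.C_mul]
    ring
  · exact (MvPolynomial.totalDegree_mul _ _).trans
      (by rw [MvPolynomial.totalDegree_C, zero_add]; exact a3)
  · have : (g i • Matrix.of fun a b => C (v a * v b) * s i) a b
        = C (v a * v b) * (g i * s i) := by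
      simp [smul_matrix_apply]; ring
    rw [this]
    exact (MvPolynomial.totalDegree_mul _ _).trans
      (by rw [MvPolynomial.totalDegree_C, zero_add]; exact a4 i)
  · refine Matrix.ext fun a b => ?_
    rw [a5]
    simp only [Matrix.of_apply, Matrix.add_apply, Matrix.sum_apply, smul_matrix_apply,
      mul_add, Finset.mul_sum]
    congr 1
    exact Finset.sum_congr rfl fun i _ => by ring
open MvPolynomial Matrix

theorem herm_smul_one {k : ℕ} (r : ℝ) : (r • (1 : Matrix (Fin k) (Fin k) ℝ)).IsHermitian := by
  unfold Matrix.IsHermitian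
  rw [Matrix.conjTranspose_smul, Matrix.conjTranspose_one, star_trivial]

theorem psd_aux {k : ℕ} {ι : Type*} [Fintype ι] (v : ι → Fin k → ℝ) (r : ℝ)
    (h : ∑ i, ∑ a, (v i a) ^ 2 ≤ r) :
    (r • (1 : Matrix (Fin k) (Fin k) ℝ) - (Matrix.of v)ᵀ * (Matrix.of v)).PosSemidef := by
  apply Matrix.PosSemidef.of_dotProduct_mulVec_nonneg
  · exact (herm_smul_one r).sub
      (Matrix.isHermitian_conjTranspose_mul_self _)
  · intro x
    rw [star_trivial, Matrix.sub_mulVec, dotProduct_sub, Matrix.smul_mulVec,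
      Matrix.one_mulVec, dotProduct_smul, smul_eq_mul, ← Matrix.mulVec_mulVec,
      Matrix.dotProduct_mulVec, Matrix.vecMul_transpose, sub_nonneg]
    have hx : (Matrix.of v).mulVec x ⬝ᵥ (Matrix.of v).mulVec x
        = ∑ i, (∑ a, v i a * x a) ^ 2 := by
      simp [dotProduct, Matrix.mulVec, sq]
    rw [hx]
    have hcs : ∀ i : ι, (∑ a, v i a * x a) ^ 2 ≤ (∑ a, (v i a) ^ 2) * ∑ a, (x a) ^ 2 :=
      fun i => Finset.sum_mul_sq_le_sq_mul_sq Finset.univ (v i) x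
    calc ∑ i, (∑ a, v i a * x a) ^ 2 ≤ ∑ i, (∑ a, (v i a) ^ 2) * ∑ a, (x a) ^ 2 :=
          Finset.sum_le_sum fun i _ => hcs i
    _ = (∑ i, ∑ a, (v i a) ^ 2) * ∑ a, (x a) ^ 2 := by rw [Finset.sum_mul]
    _ ≤ r * ∑ a, (x a) ^ 2 := by
        refine mul_le_mul_of_nonneg_right h (Finset.sum_nonneg fun a _ => sq_nonneg _)
    _ = r * (x ⬝ᵥ x) := by simp [dotProduct, sq]

theorem matqmt_const_psd {n m k : ℕ} {g : Fin m → MvPolynomial (Fin n) ℝ} {N : ℕ}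
    {P : Matrix (Fin k) (Fin k) ℝ} (hP : P.PosSemidef) :
    (P.map (C : ℝ →+* MvPolynomial (Fin n) ℝ)) ∈ MatQMtrunc g N := by
  refine ⟨P.map (C : ℝ →+* MvPolynomial (Fin n) ℝ), fun _ => 0, matIsSOS_const_psd hP,
    fun _ => matIsSOS_zero, fun a b => ?_, fun i a b => by simp [smul_matrix_apply], by simp⟩
  simp [Matrix.map_apply, MvPolynomial.totalDegree_C]

theorem posDef_of_shift {k : ℕ} {M : Matrix (Fin k) (Fin k) ℝ} {s t : ℝ}
    (h : (M - s • 1).PosSemidef) (hts : t < s) : (M - t • 1).PosDef := by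
  apply Matrix.PosDef.of_dotProduct_mulVec_pos
  · have h1 : M.IsHermitian := by
      have h0 := h.1
      have h2 : M = (M - s • 1) + s • 1 := (sub_add_cancel _ _).symm
      rw [h2]
      exact h0.add (herm_smul_one s)
    exact h1.sub (herm_smul_one t)
  · intro x hx
    have key : (M - t • 1) = (M - s • 1) + (s - t) • 1 := by
      rw [sub_smul]; abel
    rw [key, Matrix.add_mulVec, dotProduct_add, Matrix.smul_mulVec, Matrix.one_mulVec,
      dotProduct_smul, smul_eq_mul]
    have h2 := h.dotProduct_mulVec_nonneg x
    have h3 : 0 < x ⬝ᵥ x := by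
      obtain ⟨a, ha⟩ := Function.ne_iff.mp hx
      refine Finset.sum_pos' (fun b _ => mul_self_nonneg _) ⟨a, Finset.mem_univ a, ?_⟩
      exact mul_self_pos.mpr (by simpa using ha)
    rw [star_trivial] at h2 ⊢
    exact add_pos_of_nonneg_of_pos h2 (mul_pos (sub_pos.mpr hts) h3)
open MvPolynomial Matrix

theorem polyNorm_C_mul_le {n : ℕ} (t : ℝ) (f : MvPolynomial (Fin n) ℝ) :
    polyNorm (C t * f) ≤ |t| * polyNorm f := by
  classical
  have hsupp : (C t * f).support ⊆ f.support := by
    intro d hd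
    rw [MvPolynomial.mem_support_iff] at hd ⊢
    intro h0
    rw [MvPolynomial.coeff_C_mul, h0, mul_zero] at hd
    exact hd rfl
  rw [polyNorm_eq_sum hsupp, polyNorm, Finset.mul_sum]
  refine Finset.sum_le_sum fun d _ => ?_
  rw [MvPolynomial.coeff_C_mul, abs_mul]

theorem polyNorm_entry_le_matNorm {n k : ℕ} (B : Matrix (Fin k) (Fin k) (MvPolynomial (Fin n) ℝ))
    (a b : Fin k) : polyNorm (B a b) ≤ matNorm B := by
  unfold matNorm
  calc polyNorm (B a b) ≤ ∑ q, polyNorm (B a q) :=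
        Finset.single_le_sum (f := fun q => polyNorm (B a q))
          (fun q _ => polyNorm_nonneg _) (Finset.mem_univ b)
  _ ≤ ∑ p, ∑ q, polyNorm (B p q) :=
        Finset.single_le_sum (f := fun p => ∑ q, polyNorm (B p q))
          (fun p _ => Finset.sum_nonneg fun q _ => polyNorm_nonneg _) (Finset.mem_univ a)

theorem M4 {n m k : ℕ} (g : Fin m → MvPolynomial (Fin n) ℝ)
    (harch : ∀ f : MvPolynomial (Fin n) ℝ, ∃ N : ℕ, (N : MvPolynomial (Fin n) ℝ) + f ∈ QM g)
    (L : ℕ) {β : ℝ} (hβ : 0 < β) :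
    ∃ δ : ℝ, 0 < δ ∧ ∃ N₁ : ℕ, ∀ B : Matrix (Fin k) (Fin k) (MvPolynomial (Fin n) ℝ),
      B.transpose = B → (∀ a b, (B a b).totalDegree ≤ L) → matNorm B ≤ δ →
      (MvPolynomial.C β : MvPolynomial (Fin n) ℝ) • (1 : Matrix (Fin k) (Fin k) (MvPolynomial (Fin n) ℝ)) + B
        ∈ MatQMtrunc g N₁ := by
  classical
  obtain ⟨c, hc, N₀, hS1⟩ := S1 g harch L
  set cM : ℝ := 12 * k ^ 2 * c + 1 with hcM
  have hcM0 : 0 < cM := by positivity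
  set δ : ℝ := β / cM with hδ
  have hδ0 : 0 < δ := by positivity
  refine ⟨δ, hδ0, N₀, fun B hBsym hBdeg hBnorm => ?_⟩
  -- reduce to the normalized case
  set B' : Matrix (Fin k) (Fin k) (MvPolynomial (Fin n) ℝ) :=
    Matrix.of fun a b => C (cM / β) * B a b with hB'
  have hB'deg : ∀ a b, (B' a b).totalDegree ≤ L := fun a b =>
    (MvPolynomial.totalDegree_mul _ _).trans
      (by rw [MvPolynomial.totalDegree_C, zero_add]; exact hBdeg a b)
  have hB'sym : ∀ p q, B' q p = B' p q := by
    intro p q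
    have := congrFun (congrFun hBsym q) p
    simp only [Matrix.transpose_apply] at this
    simp only [hB', Matrix.of_apply, this]
  have hB'norm : matNorm B' ≤ 1 := by
    have h1 : matNorm B' ≤ (cM / β) * matNorm B := by
      unfold matNorm
      rw [Finset.mul_sum]
      refine Finset.sum_le_sum fun p _ => ?_
      rw [Finset.mul_sum]
      refine Finset.sum_le_sum fun q _ => ?_
      simpa [hB', abs_of_pos (div_pos hcM0 hβ)] using polyNorm_C_mul_le (cM / β) (B p q)
    calc matNorm B' ≤ (cM / β) * matNorm B := h1
    _ ≤ (cM / β) * δ := by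
        refine mul_le_mul_of_nonneg_left hBnorm (le_of_lt (div_pos hcM0 hβ))
    _ = 1 := by rw [hδ]; field_simp
  -- the normalized membership
  set f : Fin k → Fin k → MvPolynomial (Fin n) ℝ := fun a b => C (2⁻¹ : ℝ) * B' a b with hf
  have hfsym : ∀ p q, f q p = f p q := fun p q => by rw [hf]; simp [hB'sym p q]
  have hfdeg : ∀ a b, (f a b).totalDegree ≤ L := fun a b =>
    (MvPolynomial.totalDegree_mul _ _).trans
      (by rw [MvPolynomial.totalDegree_C, zero_add]; exact hB'deg a b)
  have hfnorm : ∀ a b, polyNorm (f a b) ≤ 1 := by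
    intro a b
    calc polyNorm (f a b) ≤ |(2⁻¹ : ℝ)| * polyNorm (B' a b) := polyNorm_C_mul_le _ _
    _ ≤ |(2⁻¹ : ℝ)| * matNorm B' := by
        refine mul_le_mul_of_nonneg_left (polyNorm_entry_le_matNorm _ _ _) (abs_nonneg _)
    _ ≤ |(2⁻¹ : ℝ)| * 1 := by
        refine mul_le_mul_of_nonneg_left hB'norm (abs_nonneg _)
    _ ≤ 1 := by rw [mul_one, abs_of_pos] <;> norm_num
  have hfnegdeg : ∀ a b, (-f a b).totalDegree ≤ L := fun a b => by
    rw [MvPolynomial.totalDegree_neg]; exact hfdeg a b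
  have hfnegnorm : ∀ a b, polyNorm (-f a b) ≤ 1 := by
    intro a b
    have : polyNorm (-f a b) = polyNorm (f a b) := by
      unfold polyNorm
      rw [MvPolynomial.support_neg]
      exact Finset.sum_congr rfl fun d _ => by rw [MvPolynomial.coeff_neg, abs_neg]
    rw [this]; exact hfnorm a b
  -- ingredients
  set ea : Fin k → Fin k → ℝ := fun a p => if a = p then (1:ℝ) else 0 with hea
  set u : Fin k → Fin k → Fin k → ℝ := fun a b p => ea a p + ea b p with hu
  set w : Fin k × Fin k × Fin 3 → Fin k → ℝ := fun i p =>
    Real.sqrt c * (match i.2.2 with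
      | 0 => u i.1 i.2.1 p
      | 1 => ea i.1 p
      | 2 => ea i.2.1 p) with hw
  have hea_sq : ∀ a : Fin k, ∑ p, (ea a p) ^ 2 = 1 := by
    intro a
    rw [hea]
    simp only [apply_ite (fun x : ℝ => x ^ 2), one_pow]
    rw [show ((0:ℝ)^2) = 0 by norm_num]
    simp [Finset.sum_ite_eq]
  have hsqrtmul : ∀ z : ℝ, (Real.sqrt c * z) ^ 2 = c * z ^ 2 := fun z => by
    rw [mul_pow, Real.sq_sqrt hc]
  have hw_bound : ∑ i : Fin k × Fin k × Fin 3, ∑ p, (w i p) ^ 2 ≤ cM := by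
    have hterm : ∀ i : Fin k × Fin k × Fin 3, ∑ p, (w i p) ^ 2 ≤ 4 * c := by
      rintro ⟨a, b, j⟩
      fin_cases j
      · have hwv : ∀ p, w (a, b, ⟨0, by decide⟩) p = Real.sqrt c * u a b p := fun p => rfl
        simp only [hwv, hsqrtmul]
        rw [← Finset.mul_sum]
        have hub : ∀ p, (u a b p) ^ 2 ≤ 2 * ((ea a p) ^ 2 + (ea b p) ^ 2) := by
          intro p
          simp only [hu]
          nlinarith [sq_nonneg (ea a p - ea b p)]
        calc c * ∑ p, (u a b p) ^ 2
            ≤ c * ∑ p, 2 * ((ea a p) ^ 2 + (ea b p) ^ 2) :=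
              mul_le_mul_of_nonneg_left (Finset.sum_le_sum fun p _ => hub p) hc
        _ = c * 4 := by
              rw [← Finset.mul_sum, Finset.sum_add_distrib, hea_sq, hea_sq]; ring
        _ ≤ 4 * c := by linarith
      · have hwv : ∀ p, w (a, b, ⟨1, by decide⟩) p = Real.sqrt c * ea a p := fun p => rfl
        simp only [hwv, hsqrtmul]
        rw [← Finset.mul_sum, hea_sq]
        nlinarith [hc]
      · have hwv : ∀ p, w (a, b, ⟨2, by decide⟩) p = Real.sqrt c * ea b p := fun p => rfl
        simp only [hwv, hsqrtmul]
        rw [← Finset.mul_sum, hea_sq]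
        nlinarith [hc]
    calc ∑ i : Fin k × Fin k × Fin 3, ∑ p, (w i p) ^ 2
        ≤ ∑ _i : Fin k × Fin k × Fin 3, 4 * c := Finset.sum_le_sum fun i _ => hterm i
    _ = (Fintype.card (Fin k × Fin k × Fin 3) : ℝ) * (4 * c) := by
        rw [Finset.sum_const, nsmul_eq_mul, Finset.card_univ]
    _ ≤ cM := by
        rw [hcM]
        simp only [Fintype.card_prod, Fintype.card_fin]
        push_cast
        nlinarith [sq_nonneg (k:ℝ), Nat.cast_nonneg (α := ℝ) k]
  -- the PSD residual matrix
  set R : Matrix (Fin k) (Fin k) ℝ := cM • 1 - (Matrix.of w)ᵀ * (Matrix.of w) with hR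
  have hRpsd : R.PosSemidef := psd_aux w cM hw_bound
  -- the bracket matrices
  set T : Fin k → Fin k → Matrix (Fin k) (Fin k) (MvPolynomial (Fin n) ℝ) := fun a b =>
    (Matrix.of fun p q => C (u a b p * u a b q) * (C c + f a b))
    + (Matrix.of fun p q => C (ea a p * ea a q) * (C c + (- f a b)))
    + (Matrix.of fun p q => C (ea b p * ea b q) * (C c + (- f a b))) with hT
  have hTmem : ∀ a b, T a b ∈ MatQMtrunc g N₀ := by
    intro a b
    exact matqmt_add (matqmt_add
      (matqmt_scalar_outer (hS1 (f a b) (hfdeg a b) (hfnorm a b)) (u a b))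
      (matqmt_scalar_outer (hS1 (-f a b) (hfnegdeg a b) (hfnegnorm a b)) (ea a)))
      (matqmt_scalar_outer (hS1 (-f a b) (hfnegdeg a b) (hfnegnorm a b)) (ea b))
  have hRentry : ∀ p q, R p q = cM * (if p = q then (1:ℝ) else 0)
      - ∑ a, ∑ b, (c * (u a b p * u a b q) + c * (ea a p * ea a q) + c * (ea b p * ea b q)) := by
    intro p q
    simp only [hR, Matrix.sub_apply, Matrix.smul_apply, Matrix.one_apply, smul_eq_mul,
      Matrix.mul_apply, Matrix.transpose_apply, Matrix.of_apply]
    congr 1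
    rw [Fintype.sum_prod_type]
    refine Finset.sum_congr rfl fun a _ => ?_
    rw [Fintype.sum_prod_type]
    refine Finset.sum_congr rfl fun b _ => ?_
    rw [Fin.sum_univ_three]
    show (Real.sqrt c * u a b p) * (Real.sqrt c * u a b q)
      + (Real.sqrt c * ea a p) * (Real.sqrt c * ea a q)
      + (Real.sqrt c * ea b p) * (Real.sqrt c * ea b q) = _
    have hss : ∀ x y : ℝ, (Real.sqrt c * x) * (Real.sqrt c * y) = c * (x * y) := by
      intro x y
      rw [mul_mul_mul_comm, Real.mul_self_sqrt hc]
    rw [hss, hss, hss]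
  have hTentry : ∀ a b p q, T a b p q
      = C (c * (u a b p * u a b q + ea a p * ea a q + ea b p * ea b q))
        + C (ea a p * ea b q + ea b p * ea a q) * f a b := by
    intro a b p q
    have hcc : ∀ x : ℝ, (C (c * x) : MvPolynomial (Fin n) ℝ) = C x * C c := by
      intro x; rw [MvPolynomial.C_mul, mul_comm]
    simp only [hT, Matrix.add_apply, Matrix.of_apply, hu, MvPolynomial.C_add,
      MvPolynomial.C_mul, hcc]
    ring
  have hsum_f : ∀ p q, (∑ a, ∑ b, C (ea a p * ea b q + ea b p * ea a q) * f a b)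
      = f p q + f q p := by
    intro p q
    have h1 : ∀ a b : Fin k, (C (ea a p * ea b q + ea b p * ea a q) : MvPolynomial (Fin n) ℝ)
          * f a b
        = (if a = p then (if b = q then f a b else 0) else 0)
          + (if b = p then (if a = q then f a b else 0) else 0) := by
      intro a b
      have hC : ∀ (x y : Prop) (_ : Decidable x) (_ : Decidable y)
          (z : MvPolynomial (Fin n) ℝ),
          C ((if x then (1:ℝ) else 0) * (if y then (1:ℝ) else 0)) * z
            = if x then (if y then z else 0) else 0 := by
        intro x y _ _ z
        split_ifs <;> simp
      rw [MvPolynomial.C_add, add_mul]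
      simp only [hea]
      rw [hC, hC]
    simp only [h1, Finset.sum_add_distrib]
    congr 1
    · calc ∑ a, ∑ b, (if a = p then (if b = q then f a b else 0) else 0)
          = ∑ a, (if a = p then (∑ b, if b = q then f a b else 0) else 0) := by
            refine Finset.sum_congr rfl fun a _ => ?_
            by_cases ha : a = p <;> simp [ha]
      _ = ∑ b, if b = q then f p b else 0 := by
            rw [Finset.sum_ite_eq' Finset.univ p (fun a => ∑ b, if b = q then f a b else 0)]
            simp
      _ = f p q := by
            rw [Finset.sum_ite_eq' Finset.univ q (fun b => f p b)]
            simp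
    · calc ∑ a, ∑ b, (if b = p then (if a = q then f a b else 0) else 0)
          = ∑ a, (if a = q then (∑ b, if b = p then f a b else 0) else 0) := by
            refine Finset.sum_congr rfl fun a _ => ?_
            by_cases ha : a = q <;> simp [ha]
      _ = ∑ b, if b = p then f q b else 0 := by
            rw [Finset.sum_ite_eq' Finset.univ q (fun a => ∑ b, if b = p then f a b else 0)]
            simp
      _ = f q p := by
            rw [Finset.sum_ite_eq' Finset.univ p (fun b => f q b)]
            simp
  have hid : (MvPolynomial.C (cM:ℝ) : MvPolynomial (Fin n) ℝ) • (1 : Matrix (Fin k) (Fin k)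
        (MvPolynomial (Fin n) ℝ)) + B'
      = R.map (C : ℝ →+* MvPolynomial (Fin n) ℝ) + ∑ a, ∑ b, T a b := by
    refine Matrix.ext fun p q => ?_
    have hfB : f p q + f q p = B' p q := by
      have h2 : (C (2⁻¹:ℝ) + C (2⁻¹:ℝ) : MvPolynomial (Fin n) ℝ) = 1 := by
        rw [← map_add]
        norm_num
      calc f p q + f q p = (C (2⁻¹:ℝ) + C (2⁻¹:ℝ)) * B' p q := by
            simp only [hf, hB'sym p q]; ring
      _ = B' p q := by rw [h2, one_mul]
    simp only [Matrix.add_apply, Matrix.sum_apply, smul_matrix_apply, Matrix.map_apply]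
    rw [hRentry p q]
    have hTsum : ∑ a, ∑ b, T a b p q
        = (∑ a, ∑ b, C (c * (u a b p * u a b q + ea a p * ea a q + ea b p * ea b q)))
          + (f p q + f q p) := by
      rw [← hsum_f p q, ← Finset.sum_add_distrib]
      refine Finset.sum_congr rfl fun a _ => ?_
      rw [← Finset.sum_add_distrib]
      exact Finset.sum_congr rfl fun b _ => hTentry a b p q
    rw [hTsum, hfB, _root_.map_sub, MvPolynomial.C_mul, _root_.map_sum MvPolynomial.C]
    have hms : ∀ a : Fin k, (C (∑ b, (c * (u a b p * u a b q) + c * (ea a p * ea a q)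
          + c * (ea b p * ea b q))) : MvPolynomial (Fin n) ℝ)
        = ∑ b, C (c * (u a b p * u a b q + ea a p * ea a q + ea b p * ea b q)) := by
      intro a
      rw [_root_.map_sum]
      exact Finset.sum_congr rfl fun b _ => by rw [← mul_add, ← mul_add]
    simp only [hms]
    have hone : (C (if p = q then (1:ℝ) else 0) : MvPolynomial (Fin n) ℝ)
        = (1 : Matrix (Fin k) (Fin k) (MvPolynomial (Fin n) ℝ)) p q := by
      rw [Matrix.one_apply]
      split <;> simp
    rw [hone]
    ring
  -- conclude
  have hcore : (MvPolynomial.C (cM:ℝ) : MvPolynomial (Fin n) ℝ) • (1 : Matrix (Fin k) (Fin k)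
      (MvPolynomial (Fin n) ℝ)) + B' ∈ MatQMtrunc g N₀ := by
    rw [hid]
    exact matqmt_add (matqmt_const_psd hRpsd)
      (matqmt_sum _ _ fun a _ => matqmt_sum _ _ fun b _ => hTmem a b)
  have hfinal : (MvPolynomial.C β : MvPolynomial (Fin n) ℝ) • (1 : Matrix (Fin k) (Fin k)
        (MvPolynomial (Fin n) ℝ)) + B
      = Matrix.of fun p q => C (β / cM)
        * (((MvPolynomial.C (cM:ℝ) : MvPolynomial (Fin n) ℝ) • (1 : Matrix (Fin k) (Fin k)
          (MvPolynomial (Fin n) ℝ)) + B') p q) := by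
    refine Matrix.ext fun p q => ?_
    simp only [Matrix.of_apply, Matrix.add_apply, smul_matrix_apply, hB']
    rw [mul_add, ← mul_assoc, ← mul_assoc, ← MvPolynomial.C_mul, ← MvPolynomial.C_mul]
    rw [div_mul_cancel₀ _ (ne_of_gt hcM0)]
    rw [show β / cM * (cM / β) = 1 by field_simp]
    rw [MvPolynomial.C_1, one_mul]
  rw [hfinal]
  exact matqmt_const_smul (le_of_lt (div_pos hβ hcM0)) hcore
open MvPolynomial Matrix

/-- linear parametrization of matrices of polynomials of degree at most `L`
by their coefficient vectors -/
noncomputable def PhiFun {n k : ℕ} (L : ℕ)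
    (c : Fin k × Fin k × {d : Fin n →₀ ℕ // d ∈ monSet n L} → ℝ) :
    Matrix (Fin k) (Fin k) (MvPolynomial (Fin n) ℝ) :=
  Matrix.of fun a b => ∑ d ∈ monSet n L,
    MvPolynomial.monomial d (if hd : d ∈ monSet n L then c (a, b, ⟨d, hd⟩) else 0)

theorem PhiFun_deg {n k : ℕ} (L : ℕ)
    (c : Fin k × Fin k × {d : Fin n →₀ ℕ // d ∈ monSet n L} → ℝ) (a b : Fin k) :
    ((PhiFun L c) a b).totalDegree ≤ L :=
  totalDegree_sum_monSet_le _

theorem PhiFun_sub {n k : ℕ} (L : ℕ)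
    (c c' : Fin k × Fin k × {d : Fin n →₀ ℕ // d ∈ monSet n L} → ℝ) :
    PhiFun L (c - c') = PhiFun L c - PhiFun L c' := by
  refine Matrix.ext fun a b => ?_
  simp only [PhiFun, Matrix.of_apply, Matrix.sub_apply, ← Finset.sum_sub_distrib]
  refine Finset.sum_congr rfl fun d hd => ?_
  rw [← map_sub]
  congr 1
  simp only [dif_pos hd, Pi.sub_apply]

theorem PhiFun_psi {n k L : ℕ} (A : Matrix (Fin k) (Fin k) (MvPolynomial (Fin n) ℝ))
    (hdeg : ∀ a b, (A a b).totalDegree ≤ L) :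
    PhiFun L (fun i => MvPolynomial.coeff i.2.2.1 (A i.1 i.2.1)) = A := by
  refine Matrix.ext fun a b => ?_
  simp only [PhiFun, Matrix.of_apply]
  have h1 : ∀ d ∈ monSet n L,
      (MvPolynomial.monomial d) (if hd : d ∈ monSet n L
          then MvPolynomial.coeff d (A a b) else 0)
        = MvPolynomial.monomial d (MvPolynomial.coeff d (A a b)) := by
    intro d hd
    rw [dif_pos hd]
  rw [Finset.sum_congr rfl h1]
  exact (eq_sum_monSet (hdeg a b)).symm

theorem PhiFun_polyNorm {n k : ℕ} (L : ℕ)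
    (c : Fin k × Fin k × {d : Fin n →₀ ℕ // d ∈ monSet n L} → ℝ) (a b : Fin k) :
    polyNorm ((PhiFun L c) a b)
      ≤ ∑ d : {d : Fin n →₀ ℕ // d ∈ monSet n L}, |c (a, b, d)| := by
  refine (polyNorm_sum_monomial_le _ _).trans (le_of_eq ?_)
  rw [← Finset.sum_coe_sort (monSet n L)
    (fun d => |if hd : d ∈ monSet n L then c (a, b, ⟨d, hd⟩) else 0|)]
  refine Finset.sum_congr rfl fun d _ => ?_
  rw [dif_pos d.2]

theorem PhiFun_matNorm {n k : ℕ} (L : ℕ)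
    (c : Fin k × Fin k × {d : Fin n →₀ ℕ // d ∈ monSet n L} → ℝ) :
    matNorm (PhiFun L c) ≤ ∑ i, |c i| := by
  unfold matNorm
  rw [Fintype.sum_prod_type]
  refine Finset.sum_le_sum fun a _ => ?_
  rw [Fintype.sum_prod_type]
  exact Finset.sum_le_sum fun b _ => PhiFun_polyNorm L c a b

theorem PhiFun_sym {n k : ℕ} (L : ℕ)
    (c : Fin k × Fin k × {d : Fin n →₀ ℕ // d ∈ monSet n L} → ℝ)
    (hsym : ∀ a b d, c (a, b, d) = c (b, a, d)) : (PhiFun L c)ᵀ = PhiFun L c := by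
  refine Matrix.ext fun a b => ?_
  simp only [Matrix.transpose_apply, PhiFun, Matrix.of_apply]
  refine Finset.sum_congr rfl fun d hd => ?_
  rw [dif_pos hd, dif_pos hd, hsym]

theorem PhiFun_entry_eval_continuous {n k : ℕ} (L : ℕ) (x : Fin n → ℝ) (a b : Fin k) :
    Continuous fun c : Fin k × Fin k × {d : Fin n →₀ ℕ // d ∈ monSet n L} → ℝ =>
      MvPolynomial.eval x ((PhiFun L c) a b) := by
  have heq : (fun c : Fin k × Fin k × {d : Fin n →₀ ℕ // d ∈ monSet n L} → ℝ =>
      MvPolynomial.eval x ((PhiFun L c) a b))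
      = fun c => ∑ d ∈ monSet n L,
        (if hd : d ∈ monSet n L then c (a, b, ⟨d, hd⟩) else 0)
          * (d.prod fun i e => x i ^ e) := by
    funext c
    simp only [PhiFun, Matrix.of_apply, map_sum, MvPolynomial.eval_monomial]
  rw [heq]
  refine continuous_finset_sum _ fun d hd => ?_
  have : (fun c : Fin k × Fin k × {d : Fin n →₀ ℕ // d ∈ monSet n L} → ℝ =>
      (if hd : d ∈ monSet n L then c (a, b, ⟨d, hd⟩) else 0) * (d.prod fun i e => x i ^ e))
      = fun c => c (a, b, ⟨d, hd⟩) * (d.prod fun i e => x i ^ e) := by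
    funext c
    rw [dif_pos hd]
  rw [this]
  exact (continuous_apply _).mul continuous_const
open MvPolynomial Matrix in
theorem stmt8 {n m k : ℕ} (g : Fin m → MvPolynomial (Fin n) ℝ)
    (harch : ∀ f : MvPolynomial (Fin n) ℝ, ∃ N : ℕ, (N : MvPolynomial (Fin n) ℝ) + f ∈ QM g)
    (hputinar : ∀ A : Matrix (Fin k) (Fin k) (MvPolynomial (Fin n) ℝ),
      A.transpose = A →
      (∀ x : Fin n → ℝ, (∀ i, 0 ≤ MvPolynomial.eval x (g i)) →
        (A.map (MvPolynomial.eval x)).PosDef) →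
      A ∈ MatQM g) :
    ∀ L : ℕ, ∃ N : ℕ, ∀ A : Matrix (Fin k) (Fin k) (MvPolynomial (Fin n) ℝ),
      A.transpose = A →
      (∀ a b, (A a b).totalDegree ≤ L) →
      matNorm A ≤ L →
      (∀ x : Fin n → ℝ, (∀ i, 0 ≤ MvPolynomial.eval x (g i)) →
        (A.map (MvPolynomial.eval x) - (L : ℝ)⁻¹ • 1).PosSemidef) →
      A ∈ MatQMtrunc g N := by
  classical
  intro L
  by_cases hL0 : L = 0
  · subst hL0
    refine ⟨0, fun A hsym hdeg hnorm hpsd => ?_⟩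
    have hA0 : A = 0 := Matrix.ext fun a b => eq_zero_of_polyNorm
      ((polyNorm_entry_le_matNorm A a b).trans (by simpa using hnorm))
    rw [hA0]
    exact matqmt_zero
  have hL1 : 0 < (L : ℝ) := by
    have := Nat.one_le_iff_ne_zero.mpr hL0
    exact_mod_cast Nat.lt_of_lt_of_le Nat.zero_lt_one this
  set β : ℝ := (2 * (L : ℝ))⁻¹ with hβdef
  have hβ : 0 < β := by positivity
  have hβL : β < (L : ℝ)⁻¹ := by
    rw [hβdef]
    refine inv_strictAnti₀ hL1 (by linarith)
  obtain ⟨δ, hδ0, N₁, hM4⟩ := M4 (k := k) g harch L hβ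
  -- the coefficient space
  set I := Fin k × Fin k × {d : Fin n →₀ ℕ // d ∈ monSet n L} with hI
  set Mx : (I → ℝ) → (Fin n → ℝ) → Matrix (Fin k) (Fin k) ℝ := fun c x =>
    (PhiFun L c).map (MvPolynomial.eval x) - (L : ℝ)⁻¹ • 1 with hMx
  set K : Set (I → ℝ) :=
    ({c | ∀ a b d, c (a, b, d) = c (b, a, d)} ∩ {c | ∑ i, |c i| ≤ (L : ℝ)}) ∩
    ⋂ (x : Fin n → ℝ) (_ : ∀ i, 0 ≤ MvPolynomial.eval x (g i)),
      ((⋂ (a : Fin k) (b : Fin k), {c | Mx c x a b = Mx c x b a}) ∩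
        ⋂ (y : Fin k → ℝ), {c | 0 ≤ y ⬝ᵥ (Mx c x *ᵥ y)}) with hK
  -- entry continuity
  have hMxc : ∀ (x : Fin n → ℝ) (a b : Fin k), Continuous fun c : I → ℝ => Mx c x a b := by
    intro x a b
    have h0 : (fun c : I → ℝ => Mx c x a b)
        = fun c => MvPolynomial.eval x ((PhiFun L c) a b)
          - ((L : ℝ)⁻¹ • (1 : Matrix (Fin k) (Fin k) ℝ)) a b := rfl
    rw [h0]
    exact (PhiFun_entry_eval_continuous L x a b).sub continuous_const
  have hKclosed : IsClosed K := by
    rw [hK]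
    refine IsClosed.inter (IsClosed.inter ?_ ?_) ?_
    · have : {c : I → ℝ | ∀ a b d, c (a, b, d) = c (b, a, d)}
          = ⋂ (a : Fin k) (b : Fin k) (d : {d : Fin n →₀ ℕ // d ∈ monSet n L}),
            {c : I → ℝ | c (a, b, d) = c (b, a, d)} := by
        ext c
        simp [Set.mem_iInter]
      rw [this]
      exact isClosed_iInter fun a => isClosed_iInter fun b => isClosed_iInter fun d =>
        isClosed_eq (continuous_apply _) (continuous_apply _)
    · exact isClosed_le (continuous_finset_sum _ fun i _ => (continuous_apply i).abs)
        continuous_const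
    · refine isClosed_iInter fun x => isClosed_iInter fun hx => IsClosed.inter ?_ ?_
      · exact isClosed_iInter fun a => isClosed_iInter fun b =>
          isClosed_eq (hMxc x a b) (hMxc x b a)
      · refine isClosed_iInter fun y => ?_
        have h0 : ∀ c : I → ℝ, y ⬝ᵥ (Mx c x *ᵥ y)
            = ∑ a, y a * ∑ b, Mx c x a b * y b := fun c => rfl
        have h1 : Continuous fun c : I → ℝ => y ⬝ᵥ (Mx c x *ᵥ y) := by
          simp only [h0]
          exact continuous_finset_sum _ fun a _ => continuous_const.mul
            (continuous_finset_sum _ fun b _ => (hMxc x a b).mul continuous_const)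
        exact isClosed_le continuous_const h1
  have hKcompact : IsCompact K := by
    refine IsCompact.of_isClosed_subset (isCompact_closedBall (0 : I → ℝ) L) hKclosed ?_
    intro c hc
    rw [Metric.mem_closedBall, dist_zero_right]
    rw [pi_norm_le_iff_of_nonneg (le_of_lt hL1)]
    intro i
    rw [Real.norm_eq_abs]
    calc |c i| ≤ ∑ j, |c j| :=
          Finset.single_le_sum (f := fun j => |c j|) (fun j _ => abs_nonneg _)
            (Finset.mem_univ i)
    _ ≤ (L : ℝ) := hc.1.2
  -- positive semidefiniteness from membership
  have hpsd_of_mem : ∀ c ∈ K, ∀ x : Fin n → ℝ, (∀ i, 0 ≤ MvPolynomial.eval x (g i)) →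
      (Mx c x).PosSemidef := by
    intro c hc x hx
    have h3 := hc.2
    rw [Set.mem_iInter] at h3
    have h4 := h3 x
    rw [Set.mem_iInter] at h4
    have h5 := h4 hx
    apply Matrix.PosSemidef.of_dotProduct_mulVec_nonneg
    · refine Matrix.ext fun a b => ?_
      rw [Matrix.conjTranspose_apply, star_trivial]
      have := h5.1
      rw [Set.mem_iInter] at this
      have hba := this b
      rw [Set.mem_iInter] at hba
      exact hba a
    · intro y
      rw [star_trivial]
      have := h5.2
      rw [Set.mem_iInter] at this
      exact this y
  -- selection of truncation degrees
  have hchoice : ∀ c : I → ℝ, ∃ Nc : ℕ, c ∈ K →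
      PhiFun L c - (MvPolynomial.C β : MvPolynomial (Fin n) ℝ) • 1 ∈ MatQMtrunc g Nc := by
    intro c
    by_cases hc : c ∈ K
    · have hmapsub : ∀ x : Fin n → ℝ,
          ((PhiFun L c - (MvPolynomial.C β : MvPolynomial (Fin n) ℝ) • 1).map
            (MvPolynomial.eval x))
          = (PhiFun L c).map (MvPolynomial.eval x) - β • (1 : Matrix (Fin k) (Fin k) ℝ) := by
        intro x
        refine Matrix.ext fun a b => ?_
        simp only [Matrix.map_apply, Matrix.sub_apply, smul_matrix_apply, Matrix.smul_apply,
          smul_eq_mul, _root_.map_sub, _root_.map_mul, MvPolynomial.eval_C, Matrix.one_apply]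
        by_cases hab : a = b <;> simp [hab]
      have hput := hputinar (PhiFun L c - (MvPolynomial.C β : MvPolynomial (Fin n) ℝ) • 1)
        ?_ ?_
      · obtain ⟨Nc, hNc⟩ := matqm_matqmt hput
        exact ⟨Nc, fun _ => hNc⟩
      · rw [Matrix.transpose_sub, Matrix.transpose_smul, Matrix.transpose_one,
          PhiFun_sym L c hc.1.1]
      · intro x hx
        rw [hmapsub x]
        exact posDef_of_shift (hpsd_of_mem c hc x hx) hβL
    · exact ⟨0, fun h => absurd h hc⟩
  choose sel hsel using hchoice
  -- finite subcover
  set r : ℝ := δ / (Fintype.card I + 1) with hr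
  have hr0 : 0 < r := by positivity
  obtain ⟨t, ht⟩ := hKcompact.elim_finite_subcover
    (fun c : ↥K => Metric.ball (c : I → ℝ) r)
    (fun c => Metric.isOpen_ball)
    (fun c hc => Set.mem_iUnion.mpr ⟨⟨c, hc⟩, Metric.mem_ball_self hr0⟩)
  refine ⟨max N₁ (t.sup fun c => sel (c : I → ℝ)), fun A hsym hdeg hnorm hpsd => ?_⟩
  set cA : I → ℝ := fun i => MvPolynomial.coeff i.2.2.1 (A i.1 i.2.1) with hcA
  have hPhiA : PhiFun L cA = A := PhiFun_psi A hdeg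
  have hcAK : cA ∈ K := by
    refine ⟨⟨?_, ?_⟩, ?_⟩
    · intro a b d
      have := congrFun (congrFun hsym a) b
      simp only [Matrix.transpose_apply] at this
      simp only [hcA]
      rw [← this]
    · have hsum : ∑ i, |cA i| = matNorm A := by
        unfold matNorm
        rw [Fintype.sum_prod_type]
        refine Finset.sum_congr rfl fun a _ => ?_
        rw [Fintype.sum_prod_type]
        refine Finset.sum_congr rfl fun b _ => ?_
        rw [polyNorm_eq_sum (support_subset_monSet (hdeg a b)),
          ← Finset.sum_coe_sort (monSet n L)
            (fun d => |MvPolynomial.coeff d (A a b)|)]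
      show ∑ i, |cA i| ≤ (L : ℝ)
      rw [hsum]
      exact hnorm
    · rw [Set.mem_iInter]
      intro x
      rw [Set.mem_iInter]
      intro hx
      have hps : (Mx cA x).PosSemidef := by
        have h0 : Mx cA x = A.map (MvPolynomial.eval x) - (L : ℝ)⁻¹ • 1 := by
          rw [hMx]
          simp only [hPhiA]
        rw [h0]
        exact hpsd x hx
      refine ⟨?_, ?_⟩
      · rw [Set.mem_iInter]
        intro a
        rw [Set.mem_iInter]
        intro b
        have := hps.1
        have h2 : (Mx cA x) b a = star ((Mx cA x) a b) := by
          conv_lhs => rw [← this]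
          rw [Matrix.conjTranspose_apply]
        rw [star_trivial] at h2
        exact h2.symm
      · rw [Set.mem_iInter]
        intro y
        have := hps.dotProduct_mulVec_nonneg y
        rwa [star_trivial] at this
  -- locate a center
  have hmem := ht hcAK
  rw [Set.mem_iUnion₂] at hmem
  obtain ⟨c₀, hc₀t, hc₀ball⟩ := hmem
  have hdist : dist cA (c₀ : I → ℝ) < r := Metric.mem_ball.mp hc₀ball
  -- perturbation part
  set B : Matrix (Fin k) (Fin k) (MvPolynomial (Fin n) ℝ) := PhiFun L (cA - (c₀ : I → ℝ))
    with hB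
  have hBsym : Bᵀ = B := by
    refine PhiFun_sym L _ fun a b d => ?_
    have h1 := hcAK.1.1 a b d
    have h2 := c₀.2.1.1 a b d
    simp only [Pi.sub_apply, h1, h2]
  have hBdeg : ∀ a b, (B a b).totalDegree ≤ L := fun a b => PhiFun_deg L _ a b
  have hBnorm : matNorm B ≤ δ := by
    refine (PhiFun_matNorm L _).trans ?_
    have h1 : ∀ i : I, |(cA - (c₀ : I → ℝ)) i| ≤ dist cA (c₀ : I → ℝ) := by
      intro i
      rw [dist_eq_norm]
      calc |(cA - (c₀ : I → ℝ)) i| = ‖(cA - (c₀ : I → ℝ)) i‖ := (Real.norm_eq_abs _).symm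
      _ ≤ ‖cA - (c₀ : I → ℝ)‖ := norm_le_pi_norm _ i
    calc ∑ i, |(cA - (c₀ : I → ℝ)) i| ≤ ∑ _i : I, dist cA (c₀ : I → ℝ) :=
          Finset.sum_le_sum fun i _ => h1 i
    _ = (Fintype.card I : ℝ) * dist cA (c₀ : I → ℝ) := by
          rw [Finset.sum_const, nsmul_eq_mul, Finset.card_univ]
    _ ≤ (Fintype.card I : ℝ) * r := by
          refine mul_le_mul_of_nonneg_left (le_of_lt hdist) (Nat.cast_nonneg _)
    _ ≤ δ := by
          rw [hr]
          rw [show (Fintype.card I : ℝ) * (δ / (Fintype.card I + 1))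
            = δ * ((Fintype.card I : ℝ) / (Fintype.card I + 1)) by ring]
          calc δ * ((Fintype.card I : ℝ) / (Fintype.card I + 1)) ≤ δ * 1 := by
                refine mul_le_mul_of_nonneg_left ?_ (le_of_lt hδ0)
                rw [div_le_one (by positivity)]
                linarith
          _ = δ := mul_one δ
  have hpart2 : (MvPolynomial.C β : MvPolynomial (Fin n) ℝ) • 1 + B ∈ MatQMtrunc g N₁ :=
    hM4 B hBsym hBdeg hBnorm
  have hpart1 : PhiFun L (c₀ : I → ℝ) - (MvPolynomial.C β : MvPolynomial (Fin n) ℝ) • 1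
      ∈ MatQMtrunc g (sel (c₀ : I → ℝ)) := hsel _ c₀.2
  have hdecomp : A = (PhiFun L (c₀ : I → ℝ)
        - (MvPolynomial.C β : MvPolynomial (Fin n) ℝ) • 1)
      + ((MvPolynomial.C β : MvPolynomial (Fin n) ℝ) • 1 + B) := by
    rw [hB, PhiFun_sub, hPhiA]
    abel
  rw [hdecomp]
  refine matqmt_add (matqmt_mono ?_ hpart1) (matqmt_mono (le_max_left _ _) hpart2)
  exact le_max_of_le_right (Finset.le_sup (f := fun c : ↥K => sel (c : I → ℝ)) hc₀t)
end

section
/- For the single polynomial g = X³(1−X) ∈ ℝ[X] in one variable, the polynomial X is nonnegative on S_g = [0,1] but X does not belong to the quadratic module M_g = { s_0 + g·s_1 : s_0, s_1 sums of squares }. -/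
def IsSOS1 (p : Polynomial ℝ) : Prop :=
  ∃ (k : ℕ) (q : Fin k → Polynomial ℝ), p = ∑ i, q i ^ 2

theorem stmt18 :
    (∀ x : ℝ, 0 ≤ ((Polynomial.X : Polynomial ℝ) ^ 3 * (1 - Polynomial.X)).eval x →
      0 ≤ (Polynomial.X : Polynomial ℝ).eval x) ∧
    ¬ ∃ s₀ s₁ : Polynomial ℝ, IsSOS1 s₀ ∧ IsSOS1 s₁ ∧
      (Polynomial.X : Polynomial ℝ) =
        s₀ + (Polynomial.X : Polynomial ℝ) ^ 3 * (1 - Polynomial.X) * s₁ := by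
  constructor
  · intro x hx
    simp only [Polynomial.eval_mul, Polynomial.eval_pow, Polynomial.eval_sub,
      Polynomial.eval_one, Polynomial.eval_X] at hx ⊢
    by_contra h
    push_neg at h
    nlinarith [mul_pos (mul_pos (neg_pos.mpr h) (neg_pos.mpr h)) (neg_pos.mpr h)]
  · rintro ⟨s₀, s₁, ⟨k, q, rfl⟩, -, heq⟩
    have h0 : (∑ i, (q i) ^ 2).eval 0 = 0 := by
      have := congrArg (Polynomial.eval 0) heq
      simp at this
      linarith [this]
    have hq0 : ∀ i, (q i).eval 0 = 0 := by
      rw [Polynomial.eval_finset_sum] at h0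
      intro i
      have := (Finset.sum_eq_zero_iff_of_nonneg
        (fun i _ => by rw [Polynomial.eval_pow]; positivity)).mp h0 i (Finset.mem_univ i)
      rw [Polynomial.eval_pow] at this
      exact pow_eq_zero_iff (n := 2) (by norm_num) |>.mp this
    have hdvd : (Polynomial.X : Polynomial ℝ) ^ 2 ∣ ∑ i, (q i) ^ 2 := by
      apply Finset.dvd_sum
      intro i _
      have : (Polynomial.X : Polynomial ℝ) ∣ q i := by
        rw [Polynomial.X_dvd_iff, Polynomial.coeff_zero_eq_eval_zero]
        exact hq0 i
      exact pow_dvd_pow_of_dvd this 2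
    have hdvd2 : (Polynomial.X : Polynomial ℝ) ^ 2 ∣
        (Polynomial.X : Polynomial ℝ) ^ 3 * (1 - Polynomial.X) * s₁ :=
      ⟨Polynomial.X * (1 - Polynomial.X) * s₁, by ring⟩
    have hX : (Polynomial.X : Polynomial ℝ) ^ 2 ∣ Polynomial.X := by
      have h := dvd_add hdvd hdvd2
      rwa [← heq] at h
    obtain ⟨c, hc⟩ := hX
    by_cases hc0 : c = 0
    · simp [hc0] at hc
    · have := congrArg Polynomial.natDegree hc
      rw [Polynomial.natDegree_mul (pow_ne_zero _ Polynomial.X_ne_zero) hc0, Polynomial.natDegree_X,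
        Polynomial.natDegree_X_pow] at this
      omega
end
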